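/- Let N=(V,E) be a tree-child phylogenetic network, let u∈V be an internal node, and let v_1,…,v_k be children of u. If μ(u) > μ(v_1) + ⋯ + μ(v_k) in the product partial order, then the set M_{u,v_1,…,v_k} = {w ∈ V : u > w and μ(u) ≥ μ(w) + μ(v_1) + ⋯ + μ(v_k)} is non-empty, has maximal elements with respect to the path ordering, and every maximal element of this set is a child of u different from v_1,…,v_k. -/

import Mathlib

/-- Acyclicity of a directed graph given by a Boolean adjacency function. -/
def Acyclic {V : Type*} (E : V → V → Bool) : Prop :=
  ∀ v : V, ¬ Relation.TransGen (fun a b => E a b = true) v v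

/-- `p` is a directed path from `u` to `v`: a nonempty list of nodes starting
at `u`, ending at `v`, with consecutive nodes joined by arcs. -/
def IsWalk {V : Type*} (E : V → V → Bool) (u v : V) (p : List V) : Prop :=
  p.head? = some u ∧ p.getLast? = some v ∧ p.Chain' (fun a b => E a b = true)

/-- There is a directed path (possibly trivial) from `u` to `v`: the path ordering. -/
def Reaches {V : Type*} (E : V → V → Bool) (u v : V) : Prop :=
  ∃ p, IsWalk E u v p

/-- The in-degree of a node. -/
def inDeg {V : Type*} [Fintype V] (E : V → V → Bool) (v : V) : ℕ :=
  (Finset.univ.filter (fun u => E u v = true)).card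

/-- The out-degree of a node. -/
def outDeg {V : Type*} [Fintype V] (E : V → V → Bool) (u : V) : ℕ :=
  (Finset.univ.filter (fun v => E u v = true)).card

/-- A phylogenetic network on the label set `{1,…,n}`: a rooted DAG (exactly one root)
whose leaves (nodes of out-degree 0) are bijectively labeled by `Fin n`. -/
structure PhyloNetwork (V : Type*) [Fintype V] (n : ℕ) where
  E : V → V → Bool
  acyclic : Acyclic E
  rooted : ∃! r : V, inDeg E r = 0
  leaf : Fin n → V
  leaf_isLeaf : ∀ i, outDeg E (leaf i) = 0
  leaf_inj : Function.Injective leaf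
  leaf_surj : ∀ v, outDeg E v = 0 → ∃ i, leaf i = v

/-- A phylogenetic network is tree-child when every internal node has at least one
child that is a tree node (in-degree at most 1). -/
def TreeChild {V : Type*} [Fintype V] {n : ℕ} (N : PhyloNetwork V n) : Prop :=
  ∀ u : V, 0 < outDeg N.E u → ∃ v : V, N.E u v = true ∧ inDeg N.E v ≤ 1

/-- The μ-vector of a node: its `i`-th entry is the number of directed paths from `u`
to the leaf labeled `i`. -/
noncomputable def mu {V : Type*} [Fintype V] {n : ℕ} (N : PhyloNetwork V n) (u : V) :
    Fin n → ℕ :=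
  fun i => Set.ncard {p : List V | IsWalk N.E u (N.leaf i) p}

section WalkLemmas

variable {V : Type*} {E : V → V → Bool}

lemma walk_ne_nil {u v : V} {p : List V} (h : IsWalk E u v p) : p ≠ [] := by
  intro hp; rw [hp] at h; simp [IsWalk] at h

lemma isWalk_singleton (E : V → V → Bool) (u : V) : IsWalk E u u [u] := by
  simp [IsWalk, List.Chain', List.isChain_singleton]

lemma isWalk_cons {z v : V} {q : List V} (u : V)
    (hE : E u z = true) (h : IsWalk E z v q) : IsWalk E u v (u :: q) := by
  obtain ⟨h1, h2, h3⟩ := h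
  cases q with
  | nil => simp at h1
  | cons a t =>
    have haz : a = z := by simpa using h1
    subst haz
    exact ⟨rfl, by simpa [List.getLast?_cons_cons] using h2, List.isChain_cons_cons.mpr ⟨hE, h3⟩⟩

lemma isWalk_snoc {u y v : V} {p : List V} (h : IsWalk E u y p) (hE : E y v = true) :
    IsWalk E u v (p ++ [v]) := by
  obtain ⟨h1, h2, h3⟩ := h
  have hpne : p ≠ [] := by intro hp; rw [hp] at h1; simp at h1
  refine ⟨?_, ?_, ?_⟩
  · rw [List.head?_append_of_ne_nil _ hpne]; exact h1
  · simp [List.getLast?_concat]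
  · rw [List.Chain', List.isChain_append]
    refine ⟨h3, List.isChain_singleton v, ?_⟩
    intro x hx b hb
    rw [h2] at hx
    simp only [Option.mem_def, Option.some.injEq] at hx
    simp only [List.head?_cons, Option.mem_def, Option.some.injEq] at hb
    rw [← hx, ← hb]
    exact hE

lemma walk_cons_decomp {u v : V} {p : List V} (h : IsWalk E u v p) (hne : u ≠ v) :
    ∃ z q, p = u :: q ∧ E u z = true ∧ IsWalk E z v q := by
  obtain ⟨h1, h2, h3⟩ := h
  cases p with
  | nil => simp at h1
  | cons a t =>
    have hau : a = u := by simpa using h1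
    subst hau
    cases t with
    | nil =>
      exfalso; apply hne; simpa using h2
    | cons b t' =>
      obtain ⟨hab, hch⟩ := List.isChain_cons_cons.mp h3
      exact ⟨b, b :: t', rfl, hab, rfl, by simpa [List.getLast?_cons_cons] using h2, hch⟩

lemma walk_snoc_decomp {u v : V} {p : List V} (h : IsWalk E u v p) (hne : u ≠ v) :
    ∃ y r, p = r ++ [v] ∧ E y v = true ∧ IsWalk E u y r := by
  obtain ⟨h1, h2, h3⟩ := h
  have hpne : p ≠ [] := by intro hp; rw [hp] at h1; simp at h1
  have hlast : p.getLast hpne = v := by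
    rw [List.getLast?_eq_getLast_of_ne_nil hpne] at h2; simpa using h2
  have hsplit : p.dropLast ++ [v] = p := by
    conv_rhs => rw [← List.dropLast_append_getLast hpne]
    rw [hlast]
  set r := p.dropLast with hr
  have hrne : r ≠ [] := by
    intro h0
    rw [h0, List.nil_append] at hsplit
    rw [← hsplit] at h1
    exact hne (by simpa using h1.symm)
  have hch : List.Chain' (fun a b => E a b = true) (r ++ [v]) := by rw [hsplit]; exact h3
  rw [List.Chain', List.isChain_append] at hch
  obtain ⟨hch1, -, hstep⟩ := hch
  refine ⟨r.getLast hrne, r, hsplit.symm, ?_, ?_, ?_, hch1⟩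
  · apply hstep
    · rw [List.getLast?_eq_getLast_of_ne_nil hrne]; rfl
    · rfl
  · rw [← hsplit] at h1
    rw [List.head?_append_of_ne_nil _ hrne] at h1
    exact h1
  · rw [List.getLast?_eq_getLast_of_ne_nil hrne]

lemma reflTransGen_of_walk :
    ∀ (p : List V) {u v : V}, IsWalk E u v p →
      Relation.ReflTransGen (fun a b => E a b = true) u v := by
  intro p
  induction p with
  | nil => intro u v h; exact absurd rfl (walk_ne_nil h)
  | cons a t ih =>
    intro u v h
    obtain ⟨h1, h2, h3⟩ := h
    have hau : a = u := by simpa using h1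
    subst hau
    cases t with
    | nil =>
      have : a = v := by simpa using h2
      exact this ▸ Relation.ReflTransGen.refl
    | cons b t' =>
      obtain ⟨hab, hch⟩ := List.isChain_cons_cons.mp h3
      exact Relation.ReflTransGen.head hab
        (ih ⟨rfl, by simpa [List.getLast?_cons_cons] using h2, hch⟩)

lemma reaches_of_reflTransGen {u v : V}
    (h : Relation.ReflTransGen (fun a b => E a b = true) u v) : Reaches E u v := by
  induction h with
  | refl => exact ⟨[u], isWalk_singleton E u⟩
  | tail _ hbc ih =>
    obtain ⟨p, hp⟩ := ih
    exact ⟨_, isWalk_snoc hp hbc⟩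

lemma reaches_iff_reflTransGen {u v : V} :
    Reaches E u v ↔ Relation.ReflTransGen (fun a b => E a b = true) u v :=
  ⟨fun ⟨p, hp⟩ => reflTransGen_of_walk p hp, reaches_of_reflTransGen⟩

lemma transGen_of_reaches_ne {u v : V} (h : Reaches E u v) (hne : u ≠ v) :
    Relation.TransGen (fun a b => E a b = true) u v := by
  rcases Relation.reflTransGen_iff_eq_or_transGen.mp (reaches_iff_reflTransGen.mp h) with h' | h'
  · exact absurd h'.symm hne
  · exact h'

lemma chain'_pred :
    ∀ (t : List V) (w : V), List.Chain' (fun a b => E a b = true) (w :: t) → ∀ z ∈ t,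
      ∃ y, E y z = true ∧ Relation.ReflTransGen (fun a b => E a b = true) w y := by
  intro t
  induction t with
  | nil => intro w _ z hz; simp at hz
  | cons a t ih =>
    intro w hch z hz
    obtain ⟨hwa, hch'⟩ := List.isChain_cons_cons.mp hch
    rcases List.mem_cons.mp hz with rfl | hz'
    · exact ⟨w, hwa, Relation.ReflTransGen.refl⟩
    · obtain ⟨y, hy, hr⟩ := ih a hch' z hz'
      exact ⟨y, hy, Relation.ReflTransGen.head hwa hr⟩

lemma transGen_of_mem_tail {t : List V} {w z : V}
    (hch : List.Chain' (fun a b => E a b = true) (w :: t)) (hz : z ∈ t) :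
    Relation.TransGen (fun a b => E a b = true) w z := by
  obtain ⟨y, hy, hr⟩ := chain'_pred t w hch z hz
  exact Relation.TransGen.trans_right hr (Relation.TransGen.single hy)

lemma chain'_nodup (hE : Acyclic E) :
    ∀ (p : List V), List.Chain' (fun a b => E a b = true) p → p.Nodup := by
  intro p
  induction p with
  | nil => simp
  | cons a t ih =>
    intro hch
    refine List.nodup_cons.mpr ⟨?_, ih hch.tail⟩
    intro ha
    exact hE a (transGen_of_mem_tail hch ha)

lemma walk_finite [Fintype V] (hE : Acyclic E) (u v : V) :
    {p : List V | IsWalk E u v p}.Finite := by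
  apply (List.finite_length_le V (Fintype.card V)).subset
  intro p hp
  exact (chain'_nodup hE p hp.2.2).length_le_card

lemma parent_unique [Fintype V] {v a b : V} (h : inDeg E v ≤ 1)
    (ha : E a v = true) (hb : E b v = true) : a = b := by
  have ha' : a ∈ Finset.univ.filter (fun u => E u v = true) := by simp [ha]
  have hb' : b ∈ Finset.univ.filter (fun u => E u v = true) := by simp [hb]
  exact Finset.card_le_one.mp h a ha' b hb'

lemma ncard_walks_eq_sum [Fintype V] (hE : Acyclic E) {x t : V} (hne : x ≠ t) :
    Set.ncard {p : List V | IsWalk E x t p} =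
      ∑ z ∈ Finset.univ.filter (fun z => E x z = true),
        Set.ncard {p : List V | IsWalk E z t p} := by
  classical
  let F : V → Finset (List V) := fun z => (walk_finite hE z t).toFinset
  have hF : ∀ z, Set.ncard {p : List V | IsWalk E z t p} = (F z).card := by
    intro z
    exact Set.ncard_eq_toFinset_card _ (walk_finite hE z t)
  have key : F x = (Finset.univ.filter (fun z => E x z = true)).biUnion
      (fun z => (F z).image (List.cons x)) := by
    ext p
    simp only [F, Set.Finite.mem_toFinset, Set.mem_setOf_eq, Finset.mem_biUnion,
      Finset.mem_filter, Finset.mem_univ, true_and, Finset.mem_image]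
    constructor
    · intro hp
      obtain ⟨z, q, rfl, hxz, hq⟩ := walk_cons_decomp hp hne
      exact ⟨z, hxz, q, hq, rfl⟩
    · rintro ⟨z, hxz, q, hq, rfl⟩
      exact isWalk_cons x hxz hq
  rw [hF, key, Finset.card_biUnion]
  · apply Finset.sum_congr rfl
    intro z _
    rw [Finset.card_image_of_injective _ (fun a b hab => by simpa using hab), hF]
  · intro z1 _ z2 _ hne12
    rw [Function.onFun, Finset.disjoint_left]
    rintro p hp1 hp2
    simp only [Finset.mem_image, F, Set.Finite.mem_toFinset, Set.mem_setOf_eq] at hp1 hp2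
    obtain ⟨q1, hq1, rfl⟩ := hp1
    obtain ⟨q2, hq2, heq⟩ := hp2
    have hq12 : q2 = q1 := by simpa using heq
    subst hq12
    apply hne12
    cases q2 with
    | nil => exact absurd rfl (walk_ne_nil hq1)
    | cons a t' =>
      have h1 : a = z1 := by simpa using hq1.1
      have h2 : a = z2 := by simpa using hq2.1
      rw [← h1, ← h2]

lemma reach_through_treepath [Fintype V] (hE : Acyclic E) :
    ∀ (t : List V) (w b x : V) (r : List V),
      IsWalk E w b (w :: t) → (∀ y ∈ t, inDeg E y ≤ 1) → x ∉ t → IsWalk E x b r →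
      ∃ p, IsWalk E x w p := by
  intro t
  induction t using List.reverseRecOn with
  | nil =>
    intro w b x r hw _ _ hr
    have hbw : w = b := by simpa using hw.2.1
    exact ⟨r, hbw ▸ hr⟩
  | append_singleton t' a ih =>
    intro w b x r hw htree hx hr
    have hba : b = a := by
      have h2 := hw.2.1
      rw [show w :: (t' ++ [a]) = (w :: t') ++ [a] from rfl, List.getLast?_concat] at h2
      simpa using h2.symm
    subst hba
    have hch := hw.2.2
    rw [show w :: (t' ++ [b]) = (w :: t') ++ [b] from rfl, List.Chain', List.isChain_append] at hch
    obtain ⟨hch1, -, hlaststep⟩ := hch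
    have hwtne : (w :: t') ≠ [] := by simp
    set y0 := (w :: t').getLast hwtne with hy0
    have hstep : E y0 b = true := by
      apply hlaststep
      · rw [List.getLast?_eq_getLast_of_ne_nil hwtne]; rfl
      · rfl
    have hxne : x ≠ b := by
      intro hxb; apply hx; rw [hxb]; simp
    obtain ⟨y, r', hreq, hyb, hr'⟩ := walk_snoc_decomp hr hxne
    have hyy0 : y = y0 := parent_unique (htree b (by simp)) hyb hstep
    subst hyy0
    have hwwalk : IsWalk E w y0 (w :: t') :=
      ⟨rfl, List.getLast?_eq_getLast_of_ne_nil hwtne, hch1⟩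
    exact ih w y0 x r' hwwalk (fun y' hy' => htree y' (by simp [hy'])) 
      (fun hx' => hx (by simp [hx'])) hr'

end WalkLemmas

section NetLemmas

variable {V : Type*} [Fintype V] {n : ℕ}

lemma exists_treepath (N : PhyloNetwork V n) (h : TreeChild N) (w : V) :
    ∃ (ℓ : Fin n) (rest : List V), IsWalk N.E w (N.leaf ℓ) (w :: rest) ∧
      ∀ x ∈ rest, inDeg N.E x ≤ 1 := by
  have hwf : WellFounded (fun a b : V => N.E b a = true) := by
    have h1 : WellFounded
        (fun a b : V => Relation.TransGen (fun x y : V => N.E x y = true) b a) := by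
      letI : IsTrans V (fun a b : V => Relation.TransGen (fun x y : V => N.E x y = true) b a) :=
        ⟨fun a b c hab hbc => Relation.TransGen.trans hbc hab⟩
      letI : IsIrrefl V (fun a b : V => Relation.TransGen (fun x y : V => N.E x y = true) b a) :=
        ⟨fun a ha => N.acyclic a ha⟩
      exact Finite.wellFounded_of_trans_of_irrefl _
    have h2 : Subrelation (fun a b : V => N.E b a = true)
        (fun a b : V => Relation.TransGen (fun x y : V => N.E x y = true) b a) :=
      fun hab => Relation.TransGen.single hab
    exact h2.wf h1
  induction w using hwf.induction with
  | _ w ih =>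
    by_cases hleaf : outDeg N.E w = 0
    · obtain ⟨i, hi⟩ := N.leaf_surj w hleaf
      exact ⟨i, [], by rw [hi]; exact isWalk_singleton N.E w, by simp⟩
    · obtain ⟨z, hz, hdeg⟩ := h w (Nat.pos_of_ne_zero hleaf)
      obtain ⟨ℓ, rest, hwalk, htree⟩ := ih z hz
      refine ⟨ℓ, z :: rest, isWalk_cons w hz hwalk, ?_⟩
      intro x hx
      rcases List.mem_cons.mp hx with rfl | hx'
      · exact hdeg
      · exact htree x hx'

lemma mu_eq_sum_children (N : PhyloNetwork V n) {u : V} (hu : 0 < outDeg N.E u) :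
    mu N u = ∑ z ∈ Finset.univ.filter (fun z => N.E u z = true), mu N z := by
  funext i
  rw [Finset.sum_apply]
  have hne : u ≠ N.leaf i := by
    intro hui
    rw [hui, N.leaf_isLeaf i] at hu
    exact lt_irrefl 0 hu
  exact ncard_walks_eq_sum N.acyclic hne

end NetLemmas

/-- In a tree-child phylogenetic network, if `μ(u)` strictly dominates the sum of the
μ-vectors of some of the children of an internal node `u`, then the set
`M = {w : u > w and μ(u) ≥ μ(w) + Σ μ(vⱼ)}` is non-empty, has maximal elements with
respect to the path ordering, and every maximal element of `M` is a child of `u`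
different from the given ones. -/
theorem maximal_elements_are_new_children {V : Type*} [Fintype V] {n : ℕ}
    (N : PhyloNetwork V n) (h : TreeChild N) (u : V) (hu : 0 < outDeg N.E u)
    (C : Finset V) (hC : ∀ w ∈ C, N.E u w = true)
    (hlt : ∑ w ∈ C, mu N w < mu N u) :
    ({w : V | Reaches N.E u w ∧ w ≠ u ∧ mu N w + ∑ x ∈ C, mu N x ≤ mu N u}).Nonempty ∧
    (∃ w : V, (Reaches N.E u w ∧ w ≠ u ∧ mu N w + ∑ x ∈ C, mu N x ≤ mu N u) ∧
      ∀ w' : V, (Reaches N.E u w' ∧ w' ≠ u ∧ mu N w' + ∑ x ∈ C, mu N x ≤ mu N u) →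
        Reaches N.E w' w → w' = w) ∧
    (∀ w : V, (Reaches N.E u w ∧ w ≠ u ∧ mu N w + ∑ x ∈ C, mu N x ≤ mu N u) →
      (∀ w' : V, (Reaches N.E u w' ∧ w' ≠ u ∧ mu N w' + ∑ x ∈ C, mu N x ≤ mu N u) →
        Reaches N.E w' w → w' = w) →
      N.E u w = true ∧ w ∉ C) := by
  classical
  set step := fun a b : V => N.E a b = true with hstepdef
  set children := Finset.univ.filter (fun z => N.E u z = true) with hchildren
  have hCsub : C ⊆ children := fun w hw => by
    rw [hchildren]; simp [hC w hw]
  set D := children \ C with hD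
  have hsplit : ∑ z ∈ D, mu N z + ∑ z ∈ C, mu N z = ∑ z ∈ children, mu N z :=
    Finset.sum_sdiff hCsub
  have hmu : mu N u = ∑ z ∈ D, mu N z + ∑ z ∈ C, mu N z := by
    rw [hsplit]; exact mu_eq_sum_children N hu
  -- every element of D is in M
  have hedge_ne : ∀ z : V, N.E u z = true → z ≠ u := by
    intro z hz hzu
    exact N.acyclic u (Relation.TransGen.single (hzu ▸ hz))
  have memM : ∀ c ∈ D, Reaches N.E u c ∧ c ≠ u ∧ mu N c + ∑ x ∈ C, mu N x ≤ mu N u := by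
    intro c hc
    obtain ⟨hcch, hcC⟩ := Finset.mem_sdiff.mp hc
    have hEuc : N.E u c = true := (Finset.mem_filter.mp hcch).2
    refine ⟨⟨[u, c], isWalk_cons u hEuc (isWalk_singleton N.E c)⟩, hedge_ne c hEuc, ?_⟩
    have h1 : mu N c ≤ ∑ z ∈ D, mu N z :=
      Finset.single_le_sum (f := fun z => mu N z)
        (fun i _ => Pi.le_def.mpr (fun j => Nat.zero_le _)) hc
    calc mu N c + ∑ x ∈ C, mu N x ≤ ∑ z ∈ D, mu N z + ∑ x ∈ C, mu N x :=
          add_le_add_left h1 _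
      _ = mu N u := hmu.symm
  -- D is nonempty
  have hDne : D.Nonempty := by
    rw [Finset.nonempty_iff_ne_empty]
    intro hDe
    rw [hDe, Finset.sum_empty, zero_add] at hmu
    exact hlt.ne' hmu
  obtain ⟨c, hc⟩ := hDne
  have hcM := memM c hc
  refine ⟨⟨c, hcM⟩, ?_, ?_⟩
  · -- existence of maximal element
    letI : IsTrans V (fun a b : V => Relation.TransGen step a b) :=
      ⟨fun a b c hab hbc => Relation.TransGen.trans hab hbc⟩
    letI : IsIrrefl V (fun a b : V => Relation.TransGen step a b) :=
      ⟨fun a ha => N.acyclic a ha⟩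
    have hwf := Finite.wellFounded_of_trans_of_irrefl
      (fun a b : V => Relation.TransGen step a b)
    obtain ⟨w, hwM, hmin⟩ := hwf.has_min
      {w : V | Reaches N.E u w ∧ w ≠ u ∧ mu N w + ∑ x ∈ C, mu N x ≤ mu N u} ⟨c, hcM⟩
    refine ⟨w, hwM, fun w' hw' hw'w => ?_⟩
    by_contra hne
    exact hmin w' hw' (transGen_of_reaches_ne hw'w hne)
  · -- every maximal element is a new child
    rintro w ⟨hreach, hwu, hle⟩ hmax
    obtain ⟨ℓ, rest, hqwalk, htree⟩ := exists_treepath N h w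
    have htguw : Relation.TransGen step u w := transGen_of_reaches_ne hreach hwu.symm
    have child_not_in_rest : ∀ z, N.E u z = true → z ∉ rest := by
      intro z hz hzrest
      obtain ⟨y, hyz, hwy⟩ := chain'_pred rest w hqwalk.2.2 z hzrest
      have hyu : y = u := parent_unique (htree z hzrest) hyz hz
      rw [hyu] at hwy
      exact N.acyclic w (Relation.TransGen.trans_right hwy htguw)
    -- coordinate ℓ computations
    have hleℓ : mu N w ℓ + ∑ x ∈ C, mu N x ℓ ≤ mu N u ℓ := by
      have := hle ℓ
      simpa [Finset.sum_apply] using this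
    have hw1 : 1 ≤ mu N w ℓ := by
      have : (0 : ℕ) < mu N w ℓ :=
        (Set.ncard_pos (walk_finite N.acyclic w (N.leaf ℓ))).mpr ⟨w :: rest, hqwalk⟩
      omega
    have husum : mu N u ℓ = ∑ z ∈ D, mu N z ℓ + ∑ x ∈ C, mu N x ℓ := by
      have := congrFun hmu ℓ
      simpa [Finset.sum_apply] using this
    have hDpos : 1 ≤ ∑ z ∈ D, mu N z ℓ := by omega
    have hexz : ∃ z ∈ D, 1 ≤ mu N z ℓ := by
      by_contra hno
      push_neg at hno
      have : ∑ z ∈ D, mu N z ℓ = 0 := Finset.sum_eq_zero (fun z hz => by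
        have := hno z hz; omega)
      omega
    obtain ⟨z, hzD, hz1⟩ := hexz
    have hEuz : N.E u z = true := (Finset.mem_filter.mp (Finset.mem_sdiff.mp hzD).1).2
    obtain ⟨r, hr⟩ : ∃ r, IsWalk N.E z (N.leaf ℓ) r := by
      have : (0 : ℕ) < mu N z ℓ := hz1
      exact (Set.ncard_pos (walk_finite N.acyclic z (N.leaf ℓ))).mp this
    have hznr : z ∉ rest := child_not_in_rest z hEuz
    obtain ⟨p, hp⟩ := reach_through_treepath N.acyclic rest w (N.leaf ℓ) z r
      hqwalk htree hznr hr
    have hzw : z = w := hmax z (memM z hzD) ⟨p, hp⟩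
    subst hzw
    exact ⟨hEuz, (Finset.mem_sdiff.mp hzD).2⟩
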